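/- arXiv:2212.09510 — 3 statements merged into one kernel-verified Lean document; each statement's English description precedes it below -/
import Mathlib

section
/- Suppose functions d^t_h ≥ 0, Q̄^t_h, Q̲^t_h (with Q̄^t_{H+1} = Q̲^t_{H+1} = 0) and selected points (s^t_h, a^t_h) satisfy, for every t and h: (i) Q̄^t_h(s^t_h,a^t_h) − T*_h Q̄^t_{h+1}(s^t_h,a^t_h) ≤ d^t_h and T*_h Q̲^t_{h+1}(s^t_h,a^t_h) − Q̲^t_h(s^t_h,a^t_h) ≤ d^t_h; (ii) s^t_h maximizes s ↦ max_a Q̄^t_h(s,a) − max_a Q̲^t_h(s,a); and (iii) a^t_h maximizes a ↦ Q̄^t_h(s^t_h,a). Then for every t and h: Q̄^t_h(s^t_h,a^t_h) − Q̲^t_h(s^t_h,a^t_h) ≤ Σ_{h'=h}^{H} (d^{t}_{h'} + d̃^{t}_{h'}), where d^t_{h'} and d̃^t_{h'} denote the two bounds in (i) at step h'; in particular if both gaps are bounded by 2βσ^t_{h'}(s^t_{h'},a^t_{h'}) then Q̄^t_h(s^t_h,a^t_h) − Q̲^t_h(s^t_h,a^t_h) ≤ Σ_{h'=h}^{H}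 4βσ^t_{h'}(s^t_{h'},a^t_{h'}). -/
/-- The Bellman optimality operator of an episodic MDP:
`(T*_h Q)(s,a) = r_h(s,a) + E_{s'~P_h(·|s,a)}[max_{a'} Q(s',a')]`. -/
noncomputable def Tstar {S A : Type} [Fintype S]
    (P : ℕ → S → A → S → ℝ) (r : ℕ → S → A → ℝ) (h : ℕ) (Q : S → A → ℝ) :
    S → A → ℝ :=
  fun s a => r h s a + ∑ s' : S, P h s a s' * ⨆ a' : A, Q s' a'

/-- Recursive confidence-width bound for AE-LSVI: if at the selected points the one-step
Bellman gaps are bounded by `d^t_h` and `d̃^t_h`, the selected state maximizes the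
confidence width of the maximal values, and the selected action is optimistic, then
`Q̄^t_h(s^t_h,a^t_h) - Q̲^t_h(s^t_h,a^t_h) ≤ Σ_{h'=h}^H (d^t_{h'} + d̃^t_{h'})`;
in particular, if both gap bounds are `≤ 2βσ^t_{h'}(s^t_{h'},a^t_{h'})`, then the width
is at most `Σ_{h'=h}^H 4βσ^t_{h'}(s^t_{h'},a^t_{h'})`. -/
theorem stmt9 {S A : Type} [Fintype S] [Fintype A] [Nonempty S] [Nonempty A]
    (H T : ℕ)
    (P : ℕ → S → A → S → ℝ) (r : ℕ → S → A → ℝ)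
    (hP0 : ∀ h s a s', 0 ≤ P h s a s')
    (hP1 : ∀ h s a, ∑ s' : S, P h s a s' = 1)
    (hr : ∀ h s a, 0 ≤ r h s a ∧ r h s a ≤ 1)
    (Qbar Qlow : ℕ → ℕ → S → A → ℝ)
    (d dt : ℕ → ℕ → ℝ)
    (ss : ℕ → ℕ → S) (aa : ℕ → ℕ → A)
    (hd0 : ∀ t h, 0 ≤ d t h ∧ 0 ≤ dt t h)
    (htop : ∀ t s a, Qbar t (H + 1) s a = 0 ∧ Qlow t (H + 1) s a = 0)
    (hi : ∀ t ∈ Finset.Icc 1 T, ∀ h ∈ Finset.Icc 1 H,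
      Qbar t h (ss t h) (aa t h) - Tstar P r h (Qbar t (h + 1)) (ss t h) (aa t h) ≤ d t h ∧
      Tstar P r h (Qlow t (h + 1)) (ss t h) (aa t h) - Qlow t h (ss t h) (aa t h) ≤ dt t h)
    (hii : ∀ t ∈ Finset.Icc 1 T, ∀ h ∈ Finset.Icc 1 H, ∀ s : S,
      (⨆ a : A, Qbar t h s a) - (⨆ a : A, Qlow t h s a) ≤
        (⨆ a : A, Qbar t h (ss t h) a) - ⨆ a : A, Qlow t h (ss t h) a)
    (hiii : ∀ t ∈ Finset.Icc 1 T, ∀ h ∈ Finset.Icc 1 H, ∀ a : A,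
      Qbar t h (ss t h) a ≤ Qbar t h (ss t h) (aa t h)) :
    (∀ t ∈ Finset.Icc 1 T, ∀ h ∈ Finset.Icc 1 H,
      Qbar t h (ss t h) (aa t h) - Qlow t h (ss t h) (aa t h) ≤
        ∑ h' ∈ Finset.Icc h H, (d t h' + dt t h')) ∧
    (∀ β : ℝ, ∀ σ : ℕ → ℕ → S → A → ℝ,
      (∀ t ∈ Finset.Icc 1 T, ∀ h ∈ Finset.Icc 1 H,
        d t h ≤ 2 * β * σ t h (ss t h) (aa t h) ∧
        dt t h ≤ 2 * β * σ t h (ss t h) (aa t h)) →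
      ∀ t ∈ Finset.Icc 1 T, ∀ h ∈ Finset.Icc 1 H,
        Qbar t h (ss t h) (aa t h) - Qlow t h (ss t h) (aa t h) ≤
          ∑ h' ∈ Finset.Icc h H, 4 * β * σ t h' (ss t h') (aa t h')) := by
  -- one-step bound
  have step : ∀ t ∈ Finset.Icc 1 T, ∀ h ∈ Finset.Icc 1 H,
      Qbar t h (ss t h) (aa t h) - Qlow t h (ss t h) (aa t h) ≤
        d t h + dt t h +
          (if h < H then
            Qbar t (h+1) (ss t (h+1)) (aa t (h+1)) - Qlow t (h+1) (ss t (h+1)) (aa t (h+1))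
          else 0) := by
    intro t ht h hh
    obtain ⟨h1, hH⟩ := Finset.mem_Icc.mp hh
    obtain ⟨hA, hB⟩ := hi t ht h hh
    have diff : Tstar P r h (Qbar t (h+1)) (ss t h) (aa t h)
        - Tstar P r h (Qlow t (h+1)) (ss t h) (aa t h)
        = ∑ s' : S, P h (ss t h) (aa t h) s' *
            ((⨆ a' : A, Qbar t (h+1) s' a') - ⨆ a' : A, Qlow t (h+1) s' a') := by
      simp only [Tstar, mul_sub, Finset.sum_sub_distrib]
      ring
    by_cases hc : h < H
    · rw [if_pos hc]
      have hh1 : h + 1 ∈ Finset.Icc 1 H := Finset.mem_Icc.mpr ⟨by omega, by omega⟩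
      set W : ℝ := (⨆ a : A, Qbar t (h+1) (ss t (h+1)) a)
          - ⨆ a : A, Qlow t (h+1) (ss t (h+1)) a with hW
      have hbd : Tstar P r h (Qbar t (h+1)) (ss t h) (aa t h)
          - Tstar P r h (Qlow t (h+1)) (ss t h) (aa t h) ≤ W := by
        rw [diff]
        calc ∑ s' : S, P h (ss t h) (aa t h) s' *
              ((⨆ a' : A, Qbar t (h+1) s' a') - ⨆ a' : A, Qlow t (h+1) s' a')
            ≤ ∑ s' : S, P h (ss t h) (aa t h) s' * W := by
              apply Finset.sum_le_sum
              intro s' _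
              exact mul_le_mul_of_nonneg_left (hii t ht (h+1) hh1 s') (hP0 _ _ _ _)
          _ = (∑ s' : S, P h (ss t h) (aa t h) s') * W := (Finset.sum_mul ..).symm
          _ = W := by rw [hP1]; ring
      have hsupQbar : (⨆ a : A, Qbar t (h+1) (ss t (h+1)) a)
          = Qbar t (h+1) (ss t (h+1)) (aa t (h+1)) :=
        le_antisymm (ciSup_le (hiii t ht (h+1) hh1))
          (le_ciSup (Set.Finite.bddAbove (Set.finite_range _)) _)
      have hsupQlow : Qlow t (h+1) (ss t (h+1)) (aa t (h+1))
          ≤ ⨆ a : A, Qlow t (h+1) (ss t (h+1)) a :=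
        le_ciSup (Set.Finite.bddAbove (Set.finite_range _)) _
      have : W ≤ Qbar t (h+1) (ss t (h+1)) (aa t (h+1))
          - Qlow t (h+1) (ss t (h+1)) (aa t (h+1)) := by
        rw [hW, hsupQbar]; linarith
      linarith
    · rw [if_neg hc]
      have hHh : h = H := by omega
      have hzero : Tstar P r h (Qbar t (h+1)) (ss t h) (aa t h)
          - Tstar P r h (Qlow t (h+1)) (ss t h) (aa t h) = 0 := by
        rw [diff]
        apply Finset.sum_eq_zero
        intro s' _
        have e1 : ∀ a : A, Qbar t (h+1) s' a = 0 := fun a => by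
          rw [hHh]; exact (htop t s' a).1
        have e2 : ∀ a : A, Qlow t (h+1) s' a = 0 := fun a => by
          rw [hHh]; exact (htop t s' a).2
        simp [e1, e2]
      linarith
  -- main bound by downward induction
  have key : ∀ t ∈ Finset.Icc 1 T, ∀ n : ℕ, ∀ h ∈ Finset.Icc 1 H, H - h ≤ n →
      Qbar t h (ss t h) (aa t h) - Qlow t h (ss t h) (aa t h) ≤
        ∑ h' ∈ Finset.Icc h H, (d t h' + dt t h') := by
    intro t ht n
    induction n with
    | zero =>
      intro h hh hle
      obtain ⟨h1, hH⟩ := Finset.mem_Icc.mp hh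
      have hHh : h = H := by omega
      have := step t ht h hh
      rw [if_neg (by omega)] at this
      subst hHh
      rw [Finset.Icc_self, Finset.sum_singleton]
      linarith
    | succ n ih =>
      intro h hh hle
      obtain ⟨h1, hH⟩ := Finset.mem_Icc.mp hh
      by_cases hc : h < H
      · have hs := step t ht h hh
        rw [if_pos hc] at hs
        have hh1 : h + 1 ∈ Finset.Icc 1 H := Finset.mem_Icc.mpr ⟨by omega, by omega⟩
        have ih' := ih (h+1) hh1 (by omega)
        have hins : Finset.Icc h H = insert h (Finset.Icc (h+1) H) := by
          ext x; simp only [Finset.mem_Icc, Finset.mem_insert]; omega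
        rw [hins, Finset.sum_insert (by simp [Finset.mem_Icc])]
        linarith
      · have hHh : h = H := by omega
        have := step t ht h hh
        rw [if_neg (by omega)] at this
        subst hHh
        rw [Finset.Icc_self, Finset.sum_singleton]
        linarith
  constructor
  · intro t ht h hh
    exact key t ht (H - h) h hh le_rfl
  · intro β σ hβ t ht h hh
    obtain ⟨h1, hH⟩ := Finset.mem_Icc.mp hh
    refine (key t ht (H - h) h hh le_rfl).trans (Finset.sum_le_sum ?_)
    intro h' hh'
    obtain ⟨h'1, h'H⟩ := Finset.mem_Icc.mp hh'
    have hh'' : h' ∈ Finset.Icc 1 H := Finset.mem_Icc.mpr ⟨by omega, h'H⟩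
    obtain ⟨hd1, hd2⟩ := hβ t ht h' hh''
    linarith
end

section
/- Let K be a symmetric positive semidefinite T × T real matrix with K_{ii} ≤ 1 for all i, and λ ≥ 1. Define σ_t = λ^{-1/2} (K_{tt} − k_t^T (K^{(t-1)} + λI)^{-1} k_t)^{1/2}, where K^{(t-1)} is the top-left (t−1)×(t−1) block of K and k_t ∈ ℝ^{t−1} is the vector (K_{1t},...,K_{(t-1)t}). Then Σ_{t=1}^T σ_t ≤ √(3 Γ T), where Γ = (1/2) ln det(I + λ^{-1} K). -/
/-!
Write `z_t = σ_t²`. Eliminating `K + λI` without row exchanges factors its determinant into the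
product of its pivots; the `t`-th pivot is the Schur complement `λ + λ z_t` of the leading
`t × t` block, so `det (I + λ⁻¹K) = ∏ (1 + z_t)` and `Γ = ½ ∑ log (1 + z_t)`. Since
`0 ≤ z_t ≤ 1` and `log (1 + z) ≥ 2z/(z + 2) ≥ 2z/3` there, `∑ z_t ≤ 3Γ`, and Cauchy–Schwarz gives
`∑ σ_t ≤ √(T ∑ z_t)`.
-/

open Matrix

namespace Matrix

section Pivots

variable {R : Type*} [CommRing R]

/-- The `t`-th pivot of Gaussian elimination: the Schur complement of the leading `t × t` block in
the leading `(t + 1) × (t + 1)` block. -/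
noncomputable def leadingPivot {n : ℕ} (A : Matrix (Fin n) (Fin n) R) (t : Fin n) : R :=
  A t t - (fun j : Fin t => A t (Fin.castLE t.isLt.le j)) ⬝ᵥ
    ((A.submatrix (Fin.castLE t.isLt.le) (Fin.castLE t.isLt.le))⁻¹ *ᵥ
      fun i : Fin t => A (Fin.castLE t.isLt.le i) t)

theorem det_eq_det_submatrix_castSucc_mul_leadingPivot_last {n : ℕ}
    (A : Matrix (Fin (n + 1)) (Fin (n + 1)) R)
    (hA : IsUnit (A.submatrix Fin.castSucc Fin.castSucc).det) :
    A.det = (A.submatrix Fin.castSucc Fin.castSucc).det * leadingPivot A (Fin.last n) := by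
  set B := A.submatrix (finSumFinEquiv : Fin n ⊕ Fin 1 ≃ _) finSumFinEquiv
  have hB₁₁ : B.toBlocks₁₁ = A.submatrix Fin.castSucc Fin.castSucc := rfl
  let := B.toBlocks₁₁.invertibleOfIsUnitDet hA
  rw [← det_submatrix_equiv_self (finSumFinEquiv : Fin n ⊕ Fin 1 ≃ _)]
  change B.det = _
  rw [← fromBlocks_toBlocks B, det_fromBlocks₁₁, det_fin_one, invOf_eq_nonsing_inv, hB₁₁]
  congr 1
  simp only [B, leadingPivot, toBlocks₁₂, toBlocks₂₁, toBlocks₂₂, sub_apply, of_apply, mul_apply,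
    submatrix_apply, dotProduct, mulVec, Finset.mul_sum, Finset.sum_mul, mul_assoc]
  rw [Finset.sum_comm]
  rfl

theorem det_eq_prod_leadingPivot {n : ℕ} (A : Matrix (Fin n) (Fin n) R)
    (hA : ∀ t : Fin n, IsUnit (A.submatrix (Fin.castLE t.isLt.le) (Fin.castLE t.isLt.le)).det) :
    A.det = ∏ t, leadingPivot A t := by
  induction n with
  | zero => simp
  | succ n ih =>
    rw [det_eq_det_submatrix_castSucc_mul_leadingPivot_last A (hA (Fin.last n)),
      ih _ fun t => hA t.castSucc, Fin.prod_univ_castSucc]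
    rfl

end Pivots

section PosteriorVariance

variable {R : Type*} [CommRing R] {ι m : Type*} [Fintype m] [DecidableEq m]

/-- The posterior variance at `x` of a Gaussian process with covariance `K` and noise variance
`lam`, observed at the points `f i`. -/
noncomputable def posteriorVariance (K : Matrix ι ι R) (lam : R) (f : m → ι) (x : ι) : R :=
  K x x - (fun i => K (f i) x) ⬝ᵥ ((K.submatrix f f + lam • 1)⁻¹ *ᵥ fun i => K (f i) x)

theorem leadingPivot_add_smul_one {n : ℕ} {K : Matrix (Fin n) (Fin n) R} (hK : K.IsSymm)
    (lam : R) (t : Fin n) :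
    leadingPivot (K + lam • 1) t = lam + posteriorVariance K lam (Fin.castLE t.isLt.le) t := by
  have hsub : (K + lam • (1 : Matrix (Fin n) (Fin n) R)).submatrix
      (Fin.castLE t.isLt.le) (Fin.castLE t.isLt.le) =
      K.submatrix (Fin.castLE t.isLt.le) (Fin.castLE t.isLt.le) + lam • 1 := by
    rw [← submatrix_one _ (Fin.castLE_injective t.isLt.le)]
    rfl
  have hoff : ∀ j : Fin t, (1 : Matrix (Fin n) (Fin n) R) t (Fin.castLE t.isLt.le j) = 0 ∧
      (1 : Matrix (Fin n) (Fin n) R) (Fin.castLE t.isLt.le j) t = 0 := fun j =>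
    ⟨one_apply_ne fun h => j.isLt.ne' (congrArg Fin.val h),
      one_apply_ne fun h => j.isLt.ne (congrArg Fin.val h)⟩
  simp only [leadingPivot, posteriorVariance, hsub, add_apply, smul_apply, one_apply_eq, hoff,
    smul_zero, add_zero, hK.apply t]
  ring

theorem PosSemidef.posteriorVariance_nonneg {K : Matrix ι ι ℝ} (hK : K.PosSemidef) {lam : ℝ}
    (hlam : 0 < lam) (f : m → ι) (x : ι) : 0 ≤ posteriorVariance K lam f x := by
  have hlam1 : (lam • 1 : Matrix m m ℝ).PosDef := PosDef.one.smul hlam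
  let := hlam1.isUnit.invertible
  set B := K.submatrix f f + lam • 1
  have hB : B.PosDef := PosDef.posSemidef_add (hK.submatrix f) hlam1
  let := B.invertibleOfIsUnitDet hB.det_pos.ne'.isUnit
  set k : Matrix m Unit ℝ := replicateCol Unit fun i => K (f i) x
  let F : m ⊕ Unit → ι := Sum.elim f fun _ => x
  have hreg : (fromBlocks (lam • 1 : Matrix m m ℝ) 0 0 (0 : Matrix Unit Unit ℝ)).PosSemidef :=
    (PosDef.fromBlocks₁₁ 0 0 hlam1).2 (by simpa using PosSemidef.zero)
  have hsymm : K.IsSymm := isHermitian_iff_isSymm.1 hK.1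
  -- the posterior variance is the Schur complement of `B` in the regularized kernel on `f, x`
  have hblocks : K.submatrix F F + fromBlocks (lam • 1) 0 0 0 =
      fromBlocks B k kᴴ (of fun _ _ => K x x) := by
    ext (i | i) (j | j) <;> simp [F, B, k, hsymm.apply x]
  have hschur := (PosDef.fromBlocks₁₁ k (of fun _ _ => K x x) hB).1
    (hblocks ▸ (hK.submatrix F).add hreg)
  have := hschur.diag_nonneg (i := ())
  rwa [sub_apply, Matrix.mul_assoc, conjTranspose_replicateCol, star_trivial,
    ← replicateCol_mulVec, replicateRow_mul_replicateCol_apply, of_apply] at this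

theorem PosSemidef.posteriorVariance_le {K : Matrix ι ι ℝ} (hK : K.PosSemidef) {lam : ℝ}
    (hlam : 0 < lam) (f : m → ι) (x : ι) : posteriorVariance K lam f x ≤ K x x := by
  have hB : (K.submatrix f f + lam • 1).PosDef :=
    PosDef.posSemidef_add (hK.submatrix f) (PosDef.one.smul hlam)
  have := hB.inv.posSemidef.dotProduct_mulVec_nonneg fun i => K (f i) x
  rw [star_trivial] at this
  exact sub_le_self _ this

theorem PosSemidef.det_one_add_inv_smul_eq_prod {n : ℕ} {K : Matrix (Fin n) (Fin n) ℝ}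
    (hK : K.PosSemidef) {lam : ℝ} (hlam : 0 < lam) :
    (1 + lam⁻¹ • K).det = ∏ t, (1 + lam⁻¹ * posteriorVariance K lam (Fin.castLE t.isLt.le) t) := by
  have hpos : (K + lam • 1).PosDef := PosDef.posSemidef_add hK (PosDef.one.smul hlam)
  have hunit : ∀ t : Fin n, IsUnit ((K + lam • 1).submatrix
      (Fin.castLE t.isLt.le) (Fin.castLE t.isLt.le)).det := fun t =>
    (hpos.submatrix (Fin.castLE_injective _)).det_pos.ne'.isUnit
  have hsmul : 1 + lam⁻¹ • K = lam⁻¹ • (K + lam • 1) := by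
    rw [smul_add, smul_smul, inv_mul_cancel₀ hlam.ne', one_smul, add_comm]
  have hsymm : K.IsSymm := isHermitian_iff_isSymm.1 hK.1
  rw [hsmul, det_smul, Fintype.card_fin, ← Fin.prod_const, det_eq_prod_leadingPivot _ hunit,
    ← Finset.prod_mul_distrib]
  refine Finset.prod_congr rfl fun t _ => ?_
  rw [leadingPivot_add_smul_one hsymm, mul_add, inv_mul_cancel₀ hlam.ne']

end PosteriorVariance

end Matrix

theorem le_three_halves_mul_log_one_add {z : ℝ} (hz₀ : 0 ≤ z) (hz₁ : z ≤ 1) :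
    z ≤ 3 / 2 * Real.log (1 + z) := by
  calc z ≤ 3 / 2 * (2 * z / (z + 2)) := by
        rw [← sub_nonneg, show 3 / 2 * (2 * z / (z + 2)) - z = z * (1 - z) / (z + 2) by
          field_simp; ring]
        exact div_nonneg (mul_nonneg hz₀ (sub_nonneg.2 hz₁)) (by linarith)
    _ ≤ 3 / 2 * Real.log (1 + z) := by gcongr; exact Real.le_log_one_add_of_nonneg hz₀

theorem stmt11_general (T : ℕ)
    (K : Matrix (Fin T) (Fin T) ℝ)
    (hK : K.PosSemidef) (hKdiag : ∀ i, K i i ≤ 1)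
    (lam : ℝ) (hlam : 1 ≤ lam)
    (σ : Fin T → ℝ)
    (hσ : ∀ t : Fin T, σ t =
      Real.sqrt lam⁻¹ *
        Real.sqrt (K t t -
          (fun i : Fin t.val => K (Fin.castLE t.isLt.le i) t) ⬝ᵥ
            (((Matrix.of fun i j : Fin t.val =>
                  K (Fin.castLE t.isLt.le i) (Fin.castLE t.isLt.le j)) +
                lam • (1 : Matrix (Fin t.val) (Fin t.val) ℝ))⁻¹ *ᵥ
              fun i : Fin t.val => K (Fin.castLE t.isLt.le i) t))) :
    ∑ t : Fin T, σ t ≤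
      Real.sqrt (3 * ((1 / 2) * Real.log (1 + lam⁻¹ • K).det) * T) := by
  have hlam₀ : 0 < lam := one_pos.trans_le hlam
  set z : Fin T → ℝ := fun t => lam⁻¹ * posteriorVariance K lam (Fin.castLE t.isLt.le) t
  have hz₀ (t : Fin T) : 0 ≤ z t :=
    mul_nonneg (inv_nonneg.2 hlam₀.le) (hK.posteriorVariance_nonneg hlam₀ _ t)
  have hz₁ (t : Fin T) : z t ≤ 1 :=
    mul_le_one₀ (inv_le_one_of_one_le₀ hlam) (hK.posteriorVariance_nonneg hlam₀ _ t)
      ((hK.posteriorVariance_le hlam₀ _ t).trans (hKdiag t))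
  have hσz (t : Fin T) : σ t = √(z t) := by
    rw [hσ t, ← Real.sqrt_mul (inv_nonneg.2 hlam₀.le)]
    rfl
  have hlogdet : Real.log (1 + lam⁻¹ • K).det = ∑ t, Real.log (1 + z t) := by
    rw [hK.det_one_add_inv_smul_eq_prod hlam₀]
    exact Real.log_prod fun t _ => by linarith [hz₀ t]
  calc ∑ t, σ t = ∑ t, √(z t) * √1 := by simp [hσz]
    _ ≤ √(∑ t, z t) * √(∑ _t : Fin T, 1) := Real.sum_sqrt_mul_sqrt_le _ hz₀ fun _ => zero_le_one
    _ ≤ √(3 / 2 * ∑ t, Real.log (1 + z t)) * √T := by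
      rw [Finset.mul_sum]
      gcongr with t
      · exact le_three_halves_mul_log_one_add (hz₀ t) (hz₁ t)
      · simp
    _ = √(3 * ((1 / 2) * Real.log (1 + lam⁻¹ • K).det) * T) := by
      rw [hlogdet, ← Real.sqrt_mul' _ (Nat.cast_nonneg T)]
      ring_nf

/-- Bound on the sum of sequential posterior standard deviations: for a symmetric PSD
Gram matrix `K` with `K_{ii} ≤ 1` and `λ ≥ 1`, with
`σ_t = λ^{-1/2}(K_{tt} - k_t^T (K^{(t-1)} + λI)^{-1} k_t)^{1/2}`, one has
`Σ_{t=1}^T σ_t ≤ √(3 Γ T)` where `Γ = (1/2) ln det(I + λ^{-1} K)`. -/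
theorem stmt11 (T : ℕ) (hT : 0 < T)
    (K : Matrix (Fin T) (Fin T) ℝ)
    (hK : K.PosSemidef) (hKdiag : ∀ i, K i i ≤ 1)
    (lam : ℝ) (hlam : 1 ≤ lam)
    (σ : Fin T → ℝ)
    (hσ : ∀ t : Fin T, σ t =
      Real.sqrt lam⁻¹ *
        Real.sqrt (K t t -
          (fun i : Fin t.val => K (Fin.castLE t.isLt.le i) t) ⬝ᵥ
            (((Matrix.of fun i j : Fin t.val =>
                  K (Fin.castLE t.isLt.le i) (Fin.castLE t.isLt.le j)) +
                lam • (1 : Matrix (Fin t.val) (Fin t.val) ℝ))⁻¹ *ᵥ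
              fun i : Fin t.val => K (Fin.castLE t.isLt.le i) t))) :
    ∑ t : Fin T, σ t ≤
      Real.sqrt (3 * ((1 / 2) * Real.log (1 + lam⁻¹ • K).det) * T) :=
  stmt11_general T K hK hKdiag lam hlam σ hσ
end

section
/- Assume the high-probability event of the confidence lemma: for all t ∈ [T], h ∈ [H], and (s,a), 0 ≤ Q̄^t_h(s,a) − T*_h Q̄^t_{h+1}(s,a) ≤ 2βσ^t_h(s,a) and 0 ≤ T*_h Q̲^t_{h+1}(s,a) − Q̲^t_h(s,a) ≤ 2βσ^t_h(s,a), with Q̄^t_{H+1} = Q̲^t_{H+1} = 0. Suppose the algorithm picks s^t_h maximizing max_a Q̄^t_h(·,a) − max_a Q̲^t_h(·,a) and a^t_h maximizing Q̄^t_h(s^t_h,·), and outputs π̂ with π̂_h(s) = argmax_a max_{t∈[T]} Q̲^t_h(s,a). If additionally Σ_{t=1}^T σ^t_h(s^t_h,a^t_h) ≤ √(3 Γ T) for every h, then sup_{s∈S} (V*_1(s) − V^π̂_1(s)) ≤ 2√3 · β H (H+1) √(Γ/T). -/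
open Finset

theorem backward_induction_Icc {p : ℕ → Prop} {m n : ℕ} (top : p (n + 1))
    (step : ∀ k ∈ Icc m n, p (k + 1) → p k) : ∀ k ∈ Icc m (n + 1), p k := by
  intro k hk
  rw [mem_Icc] at hk
  exact Nat.decreasingInduction'
    (fun j hj hkj => step j (mem_Icc.2 ⟨hk.1.trans hkj, Nat.lt_succ_iff.1 hj⟩)) hk.2 top

theorem le_add_sum_Icc_of_le_succ_add {g c : ℕ → ℝ} {m n : ℕ} (hmn : m ≤ n)
    (hstep : ∀ k ∈ Icc m n, g k ≤ g (k + 1) + c k) : g m ≤ g (n + 1) + ∑ k ∈ Icc m n, c k := by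
  have hsum : -∑ k ∈ Icc m n, c k ≤ ∑ k ∈ Icc m n, (g (k + 1) - g k) := by
    rw [← sum_neg_distrib]
    exact sum_le_sum fun k hk => by linarith [hstep k hk]
  rw [sum_Icc_sub hmn] at hsum
  linarith

theorem card_mul_le_card_mul_of_le_sum {ι κ : Type*} {I : Finset ι} {J : Finset κ}
    {c : ι → κ → ℝ} {x B : ℝ} (hx : ∀ i ∈ I, x ≤ ∑ j ∈ J, c i j)
    (hB : ∀ j ∈ J, ∑ i ∈ I, c i j ≤ B) : #I * x ≤ #J * B :=
  calc (#I : ℝ) * x = ∑ _i ∈ I, x := by rw [sum_const, nsmul_eq_mul]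
    _ ≤ ∑ i ∈ I, ∑ j ∈ J, c i j := sum_le_sum hx
    _ = ∑ j ∈ J, ∑ i ∈ I, c i j := sum_comm
    _ ≤ ∑ _j ∈ J, B := sum_le_sum hB
    _ = #J * B := by rw [sum_const, nsmul_eq_mul]

theorem Real.le_biSup_finset {ι : Type*} {I : Finset ι} (f : ι → ℝ) {i : ι} (hi : i ∈ I) :
    f i ≤ ⨆ j ∈ I, f j := by
  refine le_ciSup₂ (f := fun j _ => f j) ((I.finite_toSet.image f).bddAbove.mono ?_) i hi
  rintro _ ⟨_, ⟨j, rfl⟩, ⟨hj, rfl⟩⟩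
  exact ⟨j, hj, rfl⟩

/-- Over `ℝ`, `⨆ j ∈ I, f j` also ranges over the empty suprema `⨆ _ : j ∈ I, f j = 0` for
`j ∉ I`, hence the hypothesis `0 ≤ c`. -/
theorem Real.biSup_finset_le {ι : Type*} {I : Finset ι} {f : ι → ℝ} {c : ℝ}
    (hf : ∀ i ∈ I, f i ≤ c) (hc : 0 ≤ c) : ⨆ i ∈ I, f i ≤ c :=
  Real.iSup_le (fun i => Real.iSup_le (hf i) hc) hc

theorem Real.sqrt_three_mul_mul_eq (Γ : ℝ) {T : ℝ} (hT : 0 < T) :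
    √(3 * Γ * T) = √3 * √(Γ / T) * T := by
  rw [show 3 * Γ * T = 3 * (Γ / T) * T ^ 2 by field_simp, Real.sqrt_mul' _ (by positivity),
    Real.sqrt_mul (by norm_num), Real.sqrt_sq hT.le]

/-- The exploration rule selects the state `sᵗ_h` maximising `valueGap (Q̄ᵗ_h) (Q̲ᵗ_h)`. -/
noncomputable def valueGap {S A : Type} (U L : S → A → ℝ) (s : S) : ℝ :=
  (⨆ a, U s a) - ⨆ a, L s a

section Bellman

variable {S A : Type} [Fintype S] {P : ℕ → S → A → S → ℝ} {r : ℕ → S → A → ℝ}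

theorem Tstar_mono [Finite A] {h : ℕ} {s : S} {a : A} {Q Q' : S → A → ℝ}
    (hP : ∀ s', 0 ≤ P h s a s') (hQ : ∀ s' a', Q s' a' ≤ Q' s' a') :
    Tstar P r h Q s a ≤ Tstar P r h Q' s a := by
  unfold Tstar
  gcongr with s' _
  · exact hP s'
  · exact (Set.finite_range _).bddAbove
  · exact hQ s' _

theorem Tstar_le_of_le [Nonempty A] {h : ℕ} {s : S} {a : A} {Q : S → A → ℝ} {V : S → ℝ}
    (hP : ∀ s', 0 ≤ P h s a s') (hQ : ∀ s' a', Q s' a' ≤ V s') :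
    Tstar P r h Q s a ≤ r h s a + ∑ s', P h s a s' * V s' := by
  unfold Tstar
  gcongr with s' _
  · exact hP s'
  · exact ciSup_le (hQ s')

theorem Tstar_sub_Tstar_le {h : ℕ} {s : S} {a : A} {Q Q' : S → A → ℝ} {c : ℝ}
    (hP0 : ∀ s', 0 ≤ P h s a s') (hP1 : ∑ s', P h s a s' = 1)
    (hc : ∀ s', valueGap Q Q' s' ≤ c) : Tstar P r h Q s a - Tstar P r h Q' s a ≤ c :=
  calc Tstar P r h Q s a - Tstar P r h Q' s a = ∑ s', P h s a s' * valueGap Q Q' s' := by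
        simp only [Tstar, valueGap, mul_sub, sum_sub_distrib]
        ring
    _ ≤ ∑ s', P h s a s' * c := sum_le_sum fun s' _ => mul_le_mul_of_nonneg_left (hc s') (hP0 s')
    _ = c := by rw [← sum_mul, hP1, one_mul]

theorem valueGap_le_of_Tstar [Finite A] [Nonempty A] {h : ℕ} {s : S} {a : A}
    {U L U' L' : S → A → ℝ} {G εU εL : ℝ}
    (hP0 : ∀ s', 0 ≤ P h s a s') (hP1 : ∑ s', P h s a s' = 1)
    (ha : ∀ a', U s a' ≤ U s a) (hU : U s a - Tstar P r h U' s a ≤ εU)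
    (hL : Tstar P r h L' s a - L s a ≤ εL) (hG : ∀ s', valueGap U' L' s' ≤ G) :
    valueGap U L s ≤ G + εU + εL := by
  have hT := Tstar_sub_Tstar_le (r := r) hP0 hP1 hG
  have hUa : (⨆ a', U s a') ≤ U s a := ciSup_le ha
  have hLa : L s a ≤ ⨆ a', L s a' := le_ciSup (Set.finite_range _).bddAbove a
  unfold valueGap
  linarith

theorem le_of_Tstar_le_of_eq_Tstar [Finite A] {H : ℕ} {Q U : ℕ → S → A → ℝ}
    (hP0 : ∀ h s a s', 0 ≤ P h s a s') (htop : ∀ s a, Q (H + 1) s a ≤ U (H + 1) s a)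
    (hQ : ∀ h ∈ Icc 1 H, ∀ s a, Q h s a = Tstar P r h (Q (h + 1)) s a)
    (hU : ∀ h ∈ Icc 1 H, ∀ s a, Tstar P r h (U (h + 1)) s a ≤ U h s a) :
    ∀ h ∈ Icc 1 (H + 1), ∀ s a, Q h s a ≤ U h s a :=
  backward_induction_Icc (p := fun h => ∀ s a, Q h s a ≤ U h s a) htop fun h hh ih s a =>
    (hQ h hh s a).trans_le ((Tstar_mono (hP0 h s a) ih).trans (hU h hh s a))

section PolicyValue

variable {H : ℕ} {π : ℕ → S → A} {V : ℕ → S → ℝ} {Qπ : ℕ → S → A → ℝ}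

theorem policyValue_nonneg (hP0 : ∀ h s a s', 0 ≤ P h s a s') (hr0 : ∀ h s a, 0 ≤ r h s a)
    (hVtop : ∀ s, V (H + 1) s = 0)
    (hQ : ∀ h ∈ Icc 1 H, ∀ s a, Qπ h s a = r h s a + ∑ s', P h s a s' * V (h + 1) s')
    (hV : ∀ h ∈ Icc 1 H, ∀ s, V h s = Qπ h s (π h s)) :
    ∀ h ∈ Icc 1 (H + 1), ∀ s, 0 ≤ V h s :=
  backward_induction_Icc (p := fun h => ∀ s, 0 ≤ V h s) (fun s => (hVtop s).ge)
    fun h hh ih s => by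
      rw [hV h hh, hQ h hh]
      exact add_nonneg (hr0 _ _ _) (sum_nonneg fun s' _ => mul_nonneg (hP0 _ _ _ _) (ih s'))

theorem le_policyValue_of_le_Tstar [Nonempty A] {I : Finset ℕ}
    {L : ℕ → ℕ → S → A → ℝ}
    (hP0 : ∀ h s a s', 0 ≤ P h s a s') (hr0 : ∀ h s a, 0 ≤ r h s a)
    (hVtop : ∀ s, V (H + 1) s = 0)
    (hQ : ∀ h ∈ Icc 1 H, ∀ s a, Qπ h s a = r h s a + ∑ s', P h s a s' * V (h + 1) s')
    (hV : ∀ h ∈ Icc 1 H, ∀ s, V h s = Qπ h s (π h s))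
    (hLtop : ∀ t ∈ I, ∀ s a, L t (H + 1) s a ≤ 0)
    (hL : ∀ t ∈ I, ∀ h ∈ Icc 1 H, ∀ s a, L t h s a ≤ Tstar P r h (L t (h + 1)) s a)
    (hπ : ∀ h ∈ Icc 1 H, ∀ s a, (⨆ t ∈ I, L t h s a) ≤ ⨆ t ∈ I, L t h s (π h s)) :
    ∀ h ∈ Icc 1 (H + 1), ∀ t ∈ I, ∀ s a, L t h s a ≤ V h s := by
  refine backward_induction_Icc (p := fun h => ∀ t ∈ I, ∀ s a, L t h s a ≤ V h s)
    (fun t ht s a => (hVtop s).symm ▸ hLtop t ht s a) fun h hh ih t ht s a => ?_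
  have hLQ : ∀ t ∈ I, ∀ s a, L t h s a ≤ Qπ h s a := fun t ht s a =>
    (hL t ht h hh s a).trans (hQ h hh s a ▸ Tstar_le_of_le (hP0 h s a) (ih t ht))
  have hV0 : 0 ≤ V h s :=
    policyValue_nonneg hP0 hr0 hVtop hQ hV h (Icc_subset_Icc_right H.le_succ hh) s
  calc L t h s a ≤ ⨆ t ∈ I, L t h s a := Real.le_biSup_finset (L · h s a) ht
    _ ≤ ⨆ t ∈ I, L t h s (π h s) := hπ h hh s a
    _ ≤ V h s := Real.biSup_finset_le (fun t ht => (hV h hh s).symm ▸ hLQ t ht s _) hV0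

end PolicyValue

theorem valueGap_le_sum_Icc [Finite A] [Nonempty A] {H : ℕ} (hH : 0 < H)
    {U L : ℕ → S → A → ℝ} {ss : ℕ → S} {aa : ℕ → A} {ε : ℕ → ℝ}
    (hP0 : ∀ h s a s', 0 ≤ P h s a s') (hP1 : ∀ h s a, ∑ s', P h s a s' = 1)
    (htop : ∀ s a, U (H + 1) s a = 0 ∧ L (H + 1) s a = 0)
    (hU : ∀ h ∈ Icc 1 H, U h (ss h) (aa h) - Tstar P r h (U (h + 1)) (ss h) (aa h) ≤ ε h)
    (hL : ∀ h ∈ Icc 1 H, Tstar P r h (L (h + 1)) (ss h) (aa h) - L h (ss h) (aa h) ≤ ε h)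
    (hss : ∀ h ∈ Icc 1 H, ∀ s, valueGap (U h) (L h) s ≤ valueGap (U h) (L h) (ss h))
    (haa : ∀ h ∈ Icc 1 H, ∀ a, U h (ss h) a ≤ U h (ss h) (aa h)) (s : S) :
    valueGap (U 1) (L 1) s ≤ ∑ h ∈ Icc 1 H, 2 * ε h := by
  set g : ℕ → ℝ := fun h => valueGap (U h) (L h) (ss h)
  have hlast : ∀ s, valueGap (U (H + 1)) (L (H + 1)) s = 0 := by
    simp [valueGap, htop]
  have hsel : ∀ h ∈ Icc 1 (H + 1), ∀ s, valueGap (U h) (L h) s ≤ g h := by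
    intro h hh s
    rcases (mem_Icc.1 hh).2.lt_or_eq with hlt | rfl
    · exact hss h (mem_Icc.2 ⟨(mem_Icc.1 hh).1, Nat.lt_succ_iff.1 hlt⟩) s
    · simp only [g, hlast, le_refl]
  have hstep : ∀ h ∈ Icc 1 H, g h ≤ g (h + 1) + 2 * ε h := fun h hh => by
    have hnext : h + 1 ∈ Icc 1 (H + 1) := by simp only [mem_Icc] at hh ⊢; omega
    linarith [valueGap_le_of_Tstar (hP0 h _ _) (hP1 h _ _) (haa h hh) (hU h hh) (hL h hh)
      (hsel (h + 1) hnext)]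
  calc valueGap (U 1) (L 1) s ≤ g 1 := hsel 1 (by simp) s
    _ ≤ g (H + 1) + ∑ h ∈ Icc 1 H, 2 * ε h := le_add_sum_Icc_of_le_succ_add hH hstep
    _ = ∑ h ∈ Icc 1 H, 2 * ε h := by rw [show g (H + 1) = 0 from hlast _, zero_add]

end Bellman

theorem le_two_sqrt_three_mul_of_mul_le {H T : ℕ} {x β Γ : ℝ} (hT : 0 < T) (hβ : 0 ≤ β)
    (hx : T * x ≤ H * (2 * (2 * β * √(3 * Γ * T)))) :
    x ≤ 2 * √3 * β * H * (H + 1) * √(Γ / T) := by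
  have hT' : (0 : ℝ) < T := by exact_mod_cast hT
  rw [Real.sqrt_three_mul_mul_eq Γ hT'] at hx
  have hx' : x ≤ 4 * H * (β * √3 * √(Γ / T)) :=
    le_of_mul_le_mul_left (by linarith) hT'
  have hH : (4 : ℝ) * H ≤ 2 * H * (H + 1) := by
    rcases Nat.eq_zero_or_pos H with rfl | hH
    · simp
    · have : (1 : ℝ) ≤ H := by exact_mod_cast hH
      nlinarith
  have hc : 0 ≤ β * √3 * √(Γ / T) := by positivity
  nlinarith

theorem stmt13_general {S A : Type} [Fintype S] [Fintype A] [Nonempty A]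
    (H T : ℕ) (hH : 0 < H) (hT : 0 < T)
    (P : ℕ → S → A → S → ℝ) (r : ℕ → S → A → ℝ)
    (hP0 : ∀ h s a s', 0 ≤ P h s a s')
    (hP1 : ∀ h s a, ∑ s' : S, P h s a s' = 1)
    (hr : ∀ h s a, 0 ≤ r h s a ∧ r h s a ≤ 1)
    (β Γ : ℝ) (hβ : 0 < β)
    (σ : ℕ → ℕ → S → A → ℝ)
    -- optimistic and pessimistic estimates with the confidence-lemma event
    (Qbar Qlow : ℕ → ℕ → S → A → ℝ)
    (htop : ∀ t s a, Qbar t (H + 1) s a = 0 ∧ Qlow t (H + 1) s a = 0)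
    (hconf : ∀ t ∈ Finset.Icc 1 T, ∀ h ∈ Finset.Icc 1 H, ∀ s a,
      (0 ≤ Qbar t h s a - Tstar P r h (Qbar t (h + 1)) s a ∧
        Qbar t h s a - Tstar P r h (Qbar t (h + 1)) s a ≤ 2 * β * σ t h s a) ∧
      (0 ≤ Tstar P r h (Qlow t (h + 1)) s a - Qlow t h s a ∧
        Tstar P r h (Qlow t (h + 1)) s a - Qlow t h s a ≤ 2 * β * σ t h s a))
    -- selected states and actions
    (ss : ℕ → ℕ → S) (aa : ℕ → ℕ → A)
    (hss : ∀ t ∈ Finset.Icc 1 T, ∀ h ∈ Finset.Icc 1 H, ∀ s : S,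
      (⨆ a : A, Qbar t h s a) - (⨆ a : A, Qlow t h s a) ≤
        (⨆ a : A, Qbar t h (ss t h) a) - ⨆ a : A, Qlow t h (ss t h) a)
    (haa : ∀ t ∈ Finset.Icc 1 T, ∀ h ∈ Finset.Icc 1 H, ∀ a : A,
      Qbar t h (ss t h) a ≤ Qbar t h (ss t h) (aa t h))
    -- sum-of-standard-deviations bound
    (hsum : ∀ h ∈ Finset.Icc 1 H,
      ∑ t ∈ Finset.Icc 1 T, σ t h (ss t h) (aa t h) ≤ Real.sqrt (3 * Γ * T))
    -- the optimal Q-function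
    (Qstar : ℕ → S → A → ℝ)
    (hQstartop : ∀ s a, Qstar (H + 1) s a = 0)
    (hQstarrec : ∀ h ∈ Finset.Icc 1 H, ∀ s a,
      Qstar h s a = Tstar P r h (Qstar (h + 1)) s a)
    -- values of deterministic policies, given by the Bellman equations
    (Vpol : (ℕ → S → A) → ℕ → S → ℝ) (Qpol : (ℕ → S → A) → ℕ → S → A → ℝ)
    (hVtop : ∀ π s, Vpol π (H + 1) s = 0)
    (hQpol : ∀ π, ∀ h ∈ Finset.Icc 1 H, ∀ s a,
      Qpol π h s a = r h s a + ∑ s' : S, P h s a s' * Vpol π (h + 1) s')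
    (hVpol : ∀ π, ∀ h ∈ Finset.Icc 1 H, ∀ s, Vpol π h s = Qpol π h s (π h s))
    -- π* is an optimal deterministic (greedy w.r.t. Q*) policy with Q^{π*} = Q*,
    -- so that V^{π*}_1 = V*_1
    (πstar : ℕ → S → A)
    (hπstarQ : ∀ h ∈ Finset.Icc 1 (H + 1), ∀ s a, Qpol πstar h s a = Qstar h s a)
    -- the reported pessimistic-greedy policy π̂
    (πhat : ℕ → S → A)
    (hπhat : ∀ h ∈ Finset.Icc 1 H, ∀ s a,
      (⨆ t ∈ Finset.Icc 1 T, Qlow t h s a) ≤ ⨆ t ∈ Finset.Icc 1 T, Qlow t h s (πhat h s)) :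
    ∀ s : S, Vpol πstar 1 s - Vpol πhat 1 s ≤
      2 * Real.sqrt 3 * β * H * (H + 1) * Real.sqrt (Γ / T) := by
  intro s
  have h1 : 1 ∈ Icc 1 H := mem_Icc.2 ⟨le_rfl, hH⟩
  have hoptimism : ∀ t ∈ Icc 1 T, ∀ a, Qstar 1 s a ≤ Qbar t 1 s a := fun t ht =>
    le_of_Tstar_le_of_eq_Tstar hP0 (fun s a => by rw [hQstartop, (htop t s a).1]) hQstarrec
      (fun h hh s a => sub_nonneg.1 (hconf t ht h hh s a).1.1) 1 (by simp) s
  have hpessimism := le_policyValue_of_le_Tstar hP0 (fun h s a => (hr h s a).1) (hVtop πhat)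
    (hQpol πhat) (hVpol πhat) (fun t _ s a => (htop t s a).2.le)
    (fun t ht h hh s a => sub_nonneg.1 (hconf t ht h hh s a).2.1) hπhat 1 (by simp)
  have hregret : ∀ t ∈ Icc 1 T, Vpol πstar 1 s - Vpol πhat 1 s ≤
      ∑ h ∈ Icc 1 H, 2 * (2 * β * σ t h (ss t h) (aa t h)) := fun t ht => by
    have hUs : Vpol πstar 1 s ≤ ⨆ a, Qbar t 1 s a := by
      rw [hVpol πstar 1 h1, hπstarQ 1 (by simp) s]
      exact (hoptimism t ht _).trans (le_ciSup (Set.finite_range _).bddAbove _)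
    have hLs : (⨆ a, Qlow t 1 s a) ≤ Vpol πhat 1 s := ciSup_le (hpessimism t ht s)
    have hgap := valueGap_le_sum_Icc hH hP0 hP1 (htop t)
      (fun h hh => (hconf t ht h hh _ _).1.2) (fun h hh => (hconf t ht h hh _ _).2.2)
      (hss t ht) (haa t ht) s
    unfold valueGap at hgap
    linarith
  have havg := card_mul_le_card_mul_of_le_sum hregret fun h hh => by
    simp only [← mul_sum]
    exact mul_le_mul_of_nonneg_left (mul_le_mul_of_nonneg_left (hsum h hh) (by positivity))
      zero_le_two
  simp only [Nat.card_Icc, add_tsub_cancel_right] at havg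
  exact le_two_sqrt_three_mul_of_mul_le hT hβ.le havg

/-- Deterministic core of the AE-LSVI sample complexity theorem: under the confidence
lemma event, the active state/action selection rules, the pessimistic policy reporting
rule, and the sum-of-standard-deviations bound `Σ_t σ^t_h(s^t_h,a^t_h) ≤ √(3ΓT)`,
the reported policy `π̂` satisfies
`sup_s (V*_1(s) - V^π̂_1(s)) ≤ 2√3 · βH(H+1)√(Γ/T)`. -/
theorem stmt13 {S A : Type} [Fintype S] [Fintype A] [Nonempty S] [Nonempty A]
    (H T : ℕ) (hH : 0 < H) (hT : 0 < T)
    (P : ℕ → S → A → S → ℝ) (r : ℕ → S → A → ℝ)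
    (hP0 : ∀ h s a s', 0 ≤ P h s a s')
    (hP1 : ∀ h s a, ∑ s' : S, P h s a s' = 1)
    (hr : ∀ h s a, 0 ≤ r h s a ∧ r h s a ≤ 1)
    (β Γ : ℝ) (hβ : 0 < β) (hΓ : 0 < Γ)
    (σ : ℕ → ℕ → S → A → ℝ) (hσ0 : ∀ t h s a, 0 ≤ σ t h s a)
    -- optimistic and pessimistic estimates with the confidence-lemma event
    (Qbar Qlow : ℕ → ℕ → S → A → ℝ)
    (htop : ∀ t s a, Qbar t (H + 1) s a = 0 ∧ Qlow t (H + 1) s a = 0)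
    (hconf : ∀ t ∈ Finset.Icc 1 T, ∀ h ∈ Finset.Icc 1 H, ∀ s a,
      (0 ≤ Qbar t h s a - Tstar P r h (Qbar t (h + 1)) s a ∧
        Qbar t h s a - Tstar P r h (Qbar t (h + 1)) s a ≤ 2 * β * σ t h s a) ∧
      (0 ≤ Tstar P r h (Qlow t (h + 1)) s a - Qlow t h s a ∧
        Tstar P r h (Qlow t (h + 1)) s a - Qlow t h s a ≤ 2 * β * σ t h s a))
    -- selected states and actions
    (ss : ℕ → ℕ → S) (aa : ℕ → ℕ → A)
    (hss : ∀ t ∈ Finset.Icc 1 T, ∀ h ∈ Finset.Icc 1 H, ∀ s : S,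
      (⨆ a : A, Qbar t h s a) - (⨆ a : A, Qlow t h s a) ≤
        (⨆ a : A, Qbar t h (ss t h) a) - ⨆ a : A, Qlow t h (ss t h) a)
    (haa : ∀ t ∈ Finset.Icc 1 T, ∀ h ∈ Finset.Icc 1 H, ∀ a : A,
      Qbar t h (ss t h) a ≤ Qbar t h (ss t h) (aa t h))
    -- sum-of-standard-deviations bound
    (hsum : ∀ h ∈ Finset.Icc 1 H,
      ∑ t ∈ Finset.Icc 1 T, σ t h (ss t h) (aa t h) ≤ Real.sqrt (3 * Γ * T))
    -- the optimal Q-function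
    (Qstar : ℕ → S → A → ℝ)
    (hQstartop : ∀ s a, Qstar (H + 1) s a = 0)
    (hQstarrec : ∀ h ∈ Finset.Icc 1 H, ∀ s a,
      Qstar h s a = Tstar P r h (Qstar (h + 1)) s a)
    -- values of deterministic policies, given by the Bellman equations
    (Vpol : (ℕ → S → A) → ℕ → S → ℝ) (Qpol : (ℕ → S → A) → ℕ → S → A → ℝ)
    (hVtop : ∀ π s, Vpol π (H + 1) s = 0)
    (hQpol : ∀ π, ∀ h ∈ Finset.Icc 1 H, ∀ s a,
      Qpol π h s a = r h s a + ∑ s' : S, P h s a s' * Vpol π (h + 1) s')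
    (hVpol : ∀ π, ∀ h ∈ Finset.Icc 1 H, ∀ s, Vpol π h s = Qpol π h s (π h s))
    -- π* is an optimal deterministic (greedy w.r.t. Q*) policy with Q^{π*} = Q*,
    -- so that V^{π*}_1 = V*_1
    (πstar : ℕ → S → A)
    (hπstarQ : ∀ h ∈ Finset.Icc 1 (H + 1), ∀ s a, Qpol πstar h s a = Qstar h s a)
    (hπstarg : ∀ h ∈ Finset.Icc 1 H, ∀ s a, Qstar h s a ≤ Qstar h s (πstar h s))
    -- the reported pessimistic-greedy policy π̂
    (πhat : ℕ → S → A)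
    (hπhat : ∀ h ∈ Finset.Icc 1 H, ∀ s a,
      (⨆ t ∈ Finset.Icc 1 T, Qlow t h s a) ≤ ⨆ t ∈ Finset.Icc 1 T, Qlow t h s (πhat h s)) :
    ∀ s : S, Vpol πstar 1 s - Vpol πhat 1 s ≤
      2 * Real.sqrt 3 * β * H * (H + 1) * Real.sqrt (Γ / T) :=
  stmt13_general H T hH hT P r hP0 hP1 hr β Γ hβ σ Qbar Qlow htop hconf ss aa hss haa hsum Qstar
    hQstartop hQstarrec Vpol Qpol hVtop hQpol hVpol πstar hπstarQ πhat hπhat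
end
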